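/- arXiv:1809.07459 — 3 statements merged into one kernel-verified Lean document; each statement's English description precedes it below -/
import Mathlib

section
/- Let k and m be positive integers and suppose L is a positive integer such that p(n + L, k) ≡ p(n, k) (mod m) for all natural numbers n. Then p(n + m·(k+1)·L, k+1) ≡ p(n, k+1) (mod m) for all natural numbers n; that is, m·(k+1)·L is a period of p(·, k+1) modulo m. -/
/-- `p n k` is the number of partitions of `n` into parts each of size at most `k`
(with `p 0 k = 1`). -/
def p (n k : ℕ) : ℕ :=
  (Finset.univ.filter (fun P : n.Partition => ∀ i ∈ P.parts, i ≤ k)).card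

/-!
Removing one part of size `k + 1` gives `p (n + (k + 1)) (k + 1) = p (n + (k + 1)) k + p n (k + 1)`,
so shifting `n` by `(k + 1) * L` increases `p · (k + 1)` by
`S n = ∑ i < L, p (n + (k + 1) * (i + 1)) k`. Modulo `m`, `S` is `L`-periodic and hence
`(k + 1) * L`-periodic, so `m` such shifts increase `p · (k + 1)` by `m * S n ≡ 0`.
-/

open Finset Function

section PeriodicIncrement

variable {G : Type*} [AddCommMonoid G] {f c : ℕ → G} {d : ℕ}

theorem add_mul_eq_add_nsmul_of_periodic (hf : ∀ n, f (n + d) = f n + c n) (hc : Periodic c d)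
    (n s : ℕ) : f (n + s * d) = f n + s • c n := by
  induction s with
  | zero => simp
  | succ s ih =>
    rw [add_one_mul, ← add_assoc, hf, ih, show c (n + s * d) = c n from hc.nsmul s n, succ_nsmul,
      add_assoc]

theorem periodic_mul_of_add_eq_add_periodic (m : ℕ) (hG : ∀ x : G, m • x = 0)
    (hf : ∀ n, f (n + d) = f n + c n) (hc : Periodic c d) : Periodic f (m * d) := fun n => by
  rw [add_mul_eq_add_nsmul_of_periodic hf hc, hG, add_zero]

end PeriodicIncrement

theorem Function.Periodic.sum_comp_add_const {α ι M : Type*} [AddCommSemigroup α]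
    [AddCommMonoid M] {g : α → M} {L : α} (hg : Periodic g L) (s : Finset ι) (a : ι → α) :
    Periodic (fun x => ∑ i ∈ s, g (x + a i)) L := fun x =>
  sum_congr rfl fun i _ => hg.add_const (a i) x

theorem card_filter_mem_parts {N a j : ℕ} (ha1 : 1 ≤ a) (ha : a ≤ N) (haj : a ≤ j) :
    #{P : N.Partition | (∀ i ∈ P.parts, i ≤ j) ∧ a ∈ P.parts} = p (N - a) j := by
  let e := Nat.Partition.partitionWithPartEquiv ha1 ha
  refine card_bij (fun P hP => e ⟨P, (mem_filter.1 hP).2.2⟩) ?_ ?_ ?_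
  · intro P hP
    simp only [mem_filter, mem_univ, true_and] at hP ⊢
    simp only [e, Nat.Partition.partitionWithPartEquiv_apply_parts]
    exact fun i hi => hP.1 i (Multiset.mem_of_mem_erase hi)
  · intro P _ Q _ hPQ
    simpa using e.injective hPQ
  · intro Q hQ
    simp only [mem_filter, mem_univ, true_and] at hQ
    refine ⟨(e.symm Q).1, ?_, by simp⟩
    simp only [mem_filter, mem_univ, true_and, e,
      Nat.Partition.partitionWithPartEquiv_symm_apply_parts, Multiset.mem_cons_self, and_true]
    rintro i hi
    rcases Multiset.mem_cons.1 hi with rfl | hi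
    exacts [haj, hQ i hi]

theorem p_add_succ (n k : ℕ) : p (n + (k + 1)) (k + 1) = p (n + (k + 1)) k + p n (k + 1) := by
  have hmem := card_filter_mem_parts (N := n + (k + 1)) (j := k + 1) le_add_self le_add_self le_rfl
  rw [Nat.add_sub_cancel] at hmem
  rw [← hmem, p, ← card_filter_add_card_filter_not (p := fun P => k + 1 ∈ P.parts), filter_filter,
    filter_filter, add_comm, p]
  congr 2
  ext P
  simp only [mem_filter, mem_univ, true_and]
  refine ⟨fun ⟨hle, hnot⟩ i hi => ?_,
    fun hle => ⟨fun i hi => (hle i hi).trans k.le_succ, fun hmem => by simpa using hle _ hmem⟩⟩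
  exact Nat.le_of_lt_succ ((hle i hi).lt_of_ne (by rintro rfl; exact hnot hi))

theorem p_add_succ_mul (n k t : ℕ) :
    p (n + (k + 1) * t) (k + 1) = p n (k + 1) + ∑ i ∈ range t, p (n + (k + 1) * (i + 1)) k := by
  induction t with
  | zero => simp
  | succ t ih =>
    rw [sum_range_succ, ← add_assoc, ← ih, mul_add_one, ← add_assoc, p_add_succ, add_comm]

theorem stmt_4_general (k m L : ℕ)
    (h : ∀ n : ℕ, p (n + L) k ≡ p n k [MOD m]) :
    ∀ n : ℕ, p (n + m * (k + 1) * L) (k + 1) ≡ p n (k + 1) [MOD m] := by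
  have hk : Periodic (fun n => (p n k : ZMod m)) L := fun n =>
    (ZMod.natCast_eq_natCast_iff _ _ _).2 (h n)
  have hsum : Periodic (fun n => ∑ i ∈ range L, (p (n + (k + 1) * (i + 1)) k : ZMod m))
      ((k + 1) * L) :=
    (hk.sum_comp_add_const (range L) fun i => (k + 1) * (i + 1)).nat_mul (k + 1)
  have hstep (n : ℕ) : (p (n + (k + 1) * L) (k + 1) : ZMod m) =
      p n (k + 1) + ∑ i ∈ range L, (p (n + (k + 1) * (i + 1)) k : ZMod m) := by
    rw [p_add_succ_mul, Nat.cast_add, Nat.cast_sum]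
  intro n
  rw [← ZMod.natCast_eq_natCast_iff, mul_assoc]
  exact periodic_mul_of_add_eq_add_periodic (f := fun n => (p n (k + 1) : ZMod m)) m
    (fun x => by simp) hstep hsum n

theorem stmt_4 (k m L : ℕ) (hk : 0 < k) (hm : 0 < m) (hL : 0 < L)
    (h : ∀ n : ℕ, p (n + L) k ≡ p n k [MOD m]) :
    ∀ n : ℕ, p (n + m * (k + 1) * L) (k + 1) ≡ p n (k + 1) [MOD m] :=
  stmt_4_general k m L h
end

section
/- If for some positive integer k the odd density of p(·,k) is greater than 2/3 (i.e., lim_{N→∞} #{n ≤ N : p(n,k) is odd}/N > 2/3), then the density of even values of p(·,k+1) is greater than 1/3 (i.e., lim_{N→∞} #{n ≤ N : p(n,k+1) is even}/N > 1/3). -/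
open Finset Filter Function Topology

/-!
Deleting one part equal to `k + 1` gives `p n (k + 1) = p n k + p (n - (k + 1)) (k + 1)` for
`k + 1 ≤ n`. So if `p n k` is odd, one of `p n (k + 1)`, `p (n - (k + 1)) (k + 1)` is even: every
odd value of `p · k` up to `N` sits at distance `0` or `k + 1` to the right of an even value of
`p · (k + 1)`, and the even density of `p · (k + 1)` is at least half the odd density of `p · k`.
The same recurrence shows, by induction on `k`, that `p · k` is periodic modulo `2` for `k ≥ 1`,
which makes the even density of `p · (k + 1)` exist.
-/

theorem p_succ_right {n k : ℕ} (h : k + 1 ≤ n) :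
    p n (k + 1) = p n k + p (n - (k + 1)) (k + 1) := by
  rw [p, ← card_filter_add_card_filter_not (p := fun P : n.Partition => k + 1 ∉ P.parts),
    filter_filter, filter_filter]
  congr 1
  · rw [p]
    congr 1
    exact filter_congr fun P _ => by grind
  · rw [p, ← Fintype.card_subtype, ← Fintype.card_subtype]
    refine Fintype.card_congr <| (Equiv.subtypeEquivRight fun P => ?_).trans <|
      (Equiv.subtypeSubtypeEquivSubtypeInter (fun P : n.Partition => k + 1 ∈ P.parts)
        (fun P => ∀ i ∈ P.parts, i ≤ k + 1)).symm.trans <|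
      (Nat.Partition.partitionWithPartEquiv (by omega) h).subtypeEquiv fun P => ?_
    · rw [not_not, and_comm]
    · rw [Nat.Partition.partitionWithPartEquiv_apply_parts, ← Multiset.cons_erase P.2]
      simp

theorem p_zero_left (k : ℕ) : p 0 k = 1 := by
  simp [p]

theorem p_succ_zero (n : ℕ) : p (n + 1) 0 = 0 := by
  simp only [p, card_eq_zero, filter_eq_empty_iff, mem_univ, true_implies]
  intro P hP
  obtain ⟨i, hi⟩ := Multiset.exists_mem_of_ne_zero (s := P.parts) fun h => by
    simpa [h] using P.parts_sum
  exact (P.parts_pos hi).ne' (Nat.le_zero.mp (hP i hi))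

theorem p_one (n : ℕ) : p n 1 = 1 := by
  induction n with
  | zero => exact p_zero_left 1
  | succ n ih => rw [p_succ_right (by omega), p_succ_zero, zero_add, Nat.add_sub_cancel, ih]

theorem periodic_of_add_eq_add {G : Type*} [AddCommGroup G] {m : ℕ} (hG : ∀ x : G, m • x = 0)
    {f g : ℕ → G} {a T : ℕ} (hf : ∀ n, f (n + a) = f n + g (n + a)) (hg : Periodic g T) :
    Periodic f (m * (a * T)) := by
  -- `F` is `a`-periodic, so `f` gains the same `F n` over each of `m` blocks of length `a * T`.
  set F : ℕ → G := fun n => f (n + a * T) - f n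
  have hstep : ∀ n, f (n + a * T) = f n + F n := fun n => (add_sub_cancel _ _).symm
  have hFa : Periodic F a := fun n => by
    have hga : g (n + a * T + a) = g (n + a) := by
      rw [add_right_comm]
      simpa using hg.nat_mul a (n + a)
    show f (n + a + a * T) - f (n + a) = f (n + a * T) - f n
    rw [add_right_comm n a, hf, hf, hga]
    abel
  have hiter : ∀ j n, f (n + j * (a * T)) = f n + j • F n := by
    intro j
    induction j with
    | zero => simp
    | succ j ih =>
      intro n
      have hFj : F (n + j * (a * T)) = F n := by
        rw [show j * (a * T) = j * T * a by ring]
        simpa using hFa.nat_mul (j * T) n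
      rw [add_one_mul, ← add_assoc, hstep, ih, hFj, succ_nsmul, add_assoc]
  intro n
  rw [hiter, hG, add_zero]

section Density

variable {b : ℕ → Prop} [DecidablePred b] {T : ℕ}

theorem Function.Periodic.count_mul_add (hb : Periodic b T) (m r : ℕ) :
    Nat.count b (m * T + r) = m * Nat.count b T + Nat.count b r := by
  have hshift : ∀ j s, Nat.count b (j * T + s) = Nat.count b (j * T) + Nat.count b s := by
    intro j s
    rw [Nat.count_add]
    congr 2
    funext i
    simpa [add_comm] using hb.nat_mul j i
  rw [hshift]
  congr 1
  induction m with
  | zero => simp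
  | succ m ih => rw [add_one_mul, hshift, ih, add_one_mul]

theorem Function.Periodic.abs_count_sub_le (hb : Periodic b T) (hT : 0 < T) (N : ℕ) :
    |(Nat.count b N : ℝ) - Nat.count b T / T * N| ≤ T := by
  obtain ⟨q, r, hr, rfl⟩ : ∃ q r, r < T ∧ N = q * T + r :=
    ⟨N / T, N % T, Nat.mod_lt N hT, (Nat.div_add_mod' N T).symm⟩
  have hT' : (0 : ℝ) < T := by exact_mod_cast hT
  have hr' : (r : ℝ) ≤ T := by exact_mod_cast hr.le
  have hcr : (Nat.count b r : ℝ) ≤ r := by exact_mod_cast Nat.count_le b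
  have hc : (Nat.count b T : ℝ) / T ≤ 1 :=
    (div_le_one hT').mpr (by exact_mod_cast Nat.count_le b)
  have hc₀ : (0 : ℝ) ≤ Nat.count b T / T := by positivity
  have hcount : ((q * Nat.count b T + Nat.count b r : ℕ) : ℝ) -
      Nat.count b T / T * (q * T + r : ℕ) = Nat.count b r - Nat.count b T / T * r := by
    push_cast
    field_simp
    ring
  rw [hb.count_mul_add, hcount, abs_sub_le_iff]
  constructor <;> nlinarith

theorem tendsto_div_of_abs_sub_mul_le {u : ℕ → ℝ} {a B : ℝ}
    (h : ∀ N, |u N - a * N| ≤ B) :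
    Tendsto (fun N => u N / N) atTop (𝓝 a) := by
  rw [tendsto_iff_norm_sub_tendsto_zero]
  refine squeeze_zero' (Eventually.of_forall fun _ => norm_nonneg _) ?_
    (tendsto_const_div_atTop_nhds_zero_nat B)
  filter_upwards [eventually_gt_atTop 0] with N hN
  have hN' : (0 : ℝ) < N := by exact_mod_cast hN
  rw [Real.norm_eq_abs, div_sub' hN'.ne', abs_div, abs_of_pos hN']
  gcongr
  rw [mul_comm]; exact h N

theorem Function.Periodic.tendsto_count_succ_div (hb : Periodic b T) (hT : 0 < T) :
    Tendsto (fun N : ℕ => (Nat.count b (N + 1) : ℝ) / N) atTop (𝓝 (Nat.count b T / T)) := by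
  refine tendsto_div_of_abs_sub_mul_le (B := T + Nat.count b T / T) fun N => ?_
  calc |(Nat.count b (N + 1) : ℝ) - Nat.count b T / T * N|
      = |((Nat.count b (N + 1) : ℝ) - Nat.count b T / T * (N + 1 : ℕ)) +
          Nat.count b T / T| := by
        push_cast; ring_nf
    _ ≤ T + Nat.count b T / T := by
        refine (abs_add_le _ _).trans (add_le_add (hb.abs_count_sub_le hT _) (abs_of_nonneg ?_).le)
        positivity

end Density

theorem exists_periodic_p_cast_zmod_two {k : ℕ} (hk : 0 < k) :
    ∃ T, 0 < T ∧ Periodic (fun n => (p n k : ZMod 2)) T := by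
  induction k, hk using Nat.le_induction with
  | base => exact ⟨1, one_pos, fun n => by simp [p_one]⟩
  | succ k _ ih =>
    obtain ⟨T, hT, hper⟩ := ih
    refine ⟨2 * ((k + 1) * T), by positivity,
      periodic_of_add_eq_add CharTwo.two_nsmul (fun n => ?_) hper⟩
    rw [p_succ_right (by omega), Nat.add_sub_cancel]
    push_cast
    ring

theorem even_p_succ_or_even_p_sub_of_odd {n k : ℕ} (hn : k + 1 ≤ n) (h : Odd (p n k)) :
    Even (p n (k + 1)) ∨ Even (p (n - (k + 1)) (k + 1)) := by
  rw [p_succ_right hn]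
  rcases Nat.even_or_odd (p (n - (k + 1)) (k + 1)) with he | ho
  · exact Or.inr he
  · exact Or.inl (h.add_odd ho)

theorem count_le_two_mul_count_add {b e : ℕ → Prop} [DecidablePred b] [DecidablePred e]
    {a : ℕ} (h : ∀ n, a ≤ n → b n → e n ∨ e (n - a)) (M : ℕ) :
    Nat.count b M ≤ 2 * Nat.count e M + a := by
  simp only [Nat.count_eq_card_filter_range]
  set E := {n ∈ range M | e n}
  calc #{n ∈ range M | b n} ≤ #(range a ∪ E ∪ E.image (· + a)) :=
        card_le_card fun n hn => ?_
    _ ≤ a + #E + #E := by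
      grw [card_union_le, card_union_le, card_range, card_image_le]
    _ = 2 * #E + a := by ring
  simp only [mem_filter, mem_range] at hn
  simp only [E, mem_union, mem_range, mem_filter, mem_image]
  by_cases hna : n < a
  · exact Or.inl (Or.inl hna)
  · rcases h n (by omega) hn.2 with he | he
    · exact Or.inl (Or.inr ⟨hn.1, he⟩)
    · exact Or.inr ⟨n - a, ⟨by omega, he⟩, by omega⟩

theorem stmt_7_general (k : ℕ) (d : ℝ)
    (hd : Filter.Tendsto
      (fun N : ℕ =>
        (((Finset.range (N + 1)).filter (fun n => Odd (p n k))).card : ℝ) / N)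
      Filter.atTop (nhds d))
    (hgt : 2 / 3 < d) :
    ∃ d' : ℝ, 1 / 3 < d' ∧
      Filter.Tendsto
        (fun N : ℕ =>
          (((Finset.range (N + 1)).filter
            (fun n => Even (p n (k + 1)))).card : ℝ) / N)
        Filter.atTop (nhds d') := by
  obtain ⟨T, hT, hper⟩ := exists_periodic_p_cast_zmod_two k.succ_pos
  have hEven : Periodic (fun n => Even (p n (k + 1))) T := fun n => by
    simpa only [ZMod.natCast_eq_zero_iff_even] using congrArg (· = 0) (hper n)
  simp only [← Nat.count_eq_card_filter_range] at hd ⊢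
  have hlim := hEven.tendsto_count_succ_div hT
  refine ⟨_, ?_, hlim⟩
  have hbound := (hlim.const_mul 2).add (tendsto_const_div_atTop_nhds_zero_nat ((k : ℝ) + 1))
  rw [add_zero] at hbound
  have hcount (N : ℕ) := count_le_two_mul_count_add (b := fun n => Odd (p n k))
    (e := fun n => Even (p n (k + 1))) (fun _ => even_p_succ_or_even_p_sub_of_odd) N
  have hle := le_of_tendsto_of_tendsto' hd hbound fun N => by
    rw [← mul_div_assoc, ← add_div]
    gcongr
    exact_mod_cast hcount (N + 1)
  linarith

theorem stmt_7 (k : ℕ) (hk : 0 < k) (d : ℝ)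
    (hd : Filter.Tendsto
      (fun N : ℕ =>
        (((Finset.range (N + 1)).filter (fun n => Odd (p n k))).card : ℝ) / N)
      Filter.atTop (nhds d))
    (hgt : 2 / 3 < d) :
    ∃ d' : ℝ, 1 / 3 < d' ∧
      Filter.Tendsto
        (fun N : ℕ =>
          (((Finset.range (N + 1)).filter
            (fun n => Even (p n (k + 1)))).card : ℝ) / N)
        Filter.atTop (nhds d') :=
  stmt_7_general k d hd hgt
end

section
/- For every positive integer k, there are at most k(k+1)/2 − 1 consecutive even values of p(·,k): for every natural number i there exists n with i ≤ n ≤ i + k(k+1)/2 − 1 such that p(n, k) is odd. -/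
/-!
Over `𝔽₂` the generating function `∑ p(n,k) Xⁿ` is the inverse of the polynomial
`q = ∏_{j=1}^k (1 - X^j)`, which in characteristic two is monic of degree `N = k(k+1)/2`.
Comparing coefficients in `q · ∑ p(n,k) Xⁿ = 1` at `n + N` expresses `p(n,k)`
mod 2 through the `N` values that follow it, so a block of `N` consecutive even values propagates
downwards to `p(0,k) = 1`, which is odd.
-/

open Finset Polynomial
open scoped PowerSeries

namespace Polynomial

namespace Monic

variable {R : Type*} [Semiring R] {q : R[X]} {f : R⟦X⟧}

theorem coeff_eq_zero_of_forall_Ioc (hq : q.Monic) (hdeg : 0 < q.natDegree)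
    (hf : (q : R⟦X⟧) * f = 1) {n : ℕ}
    (hvan : ∀ m ∈ Ioc n (n + q.natDegree), f.coeff m = 0) : f.coeff n = 0 := by
  have h := congrArg (PowerSeries.coeff (n + q.natDegree)) hf
  rw [PowerSeries.coeff_mul, PowerSeries.coeff_one, if_neg (by omega),
    sum_eq_single_of_mem (q.natDegree, n) (by simp [add_comm]) ?_] at h
  · rwa [coeff_coe, hq.coeff_natDegree, one_mul] at h
  rintro ⟨j, m⟩ hjm hne
  rw [HasAntidiagonal.mem_antidiagonal] at hjm
  rcases lt_or_ge q.natDegree j with hj | hj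
  · rw [coeff_coe, coeff_eq_zero_of_natDegree_lt hj, zero_mul]
  · have hjN : j ≠ q.natDegree := fun h ↦ hne (by simp only [h, Prod.mk.injEq, true_and]; omega)
    rw [hvan m (mem_Ioc.mpr (by omega)), mul_zero]

theorem exists_mem_Ico_coeff_ne_zero [Nontrivial R] (hq : q.Monic) (hdeg : 0 < q.natDegree)
    (hf : (q : R⟦X⟧) * f = 1) (i : ℕ) : ∃ n ∈ Ico i (i + q.natDegree), f.coeff n ≠ 0 := by
  by_contra! hvan
  have hwindow : ∀ m ≤ i, ∀ n ∈ Ico m (m + q.natDegree), f.coeff n = 0 := by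
    intro m hm
    induction hm using Nat.decreasingInduction with
    | self => exact hvan
    | of_succ m _ ih =>
      intro n hn
      obtain rfl | hnm := eq_or_ne n m
      · exact hq.coeff_eq_zero_of_forall_Ioc hdeg hf fun l hl ↦
          ih l (by simp only [mem_Ioc, mem_Ico] at hl ⊢; omega)
      · exact ih n (by simp only [mem_Ico] at hn ⊢; omega)
  have h := congrArg (PowerSeries.coeff 0) hf
  simp [PowerSeries.coeff_mul, hwindow 0 (Nat.zero_le i) 0 (by simpa using hdeg)] at h

end Monic

section CharTwo

variable {R : Type*} [CommRing R] [CharP R 2]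

theorem monic_one_sub_X_pow {n : ℕ} (hn : 0 < n) : (1 - X ^ n : R[X]).Monic := by
  rw [CharTwo.sub_eq_add, add_comm]
  exact leadingCoeff_X_pow_add_one hn

theorem natDegree_one_sub_X_pow (n : ℕ) : (1 - X ^ n : R[X]).natDegree = n := by
  have : Nontrivial R := CharP.nontrivial_of_char_ne_one (v := 2) (by norm_num)
  rw [CharTwo.sub_eq_add, add_comm, ← C_1]
  exact natDegree_X_pow_add_C

theorem monic_prod_one_sub_X_pow (k : ℕ) : (∏ i ∈ range k, (1 - X ^ (i + 1) : R[X])).Monic :=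
  monic_prod_of_monic _ _ fun i _ ↦ monic_one_sub_X_pow i.succ_pos

theorem natDegree_prod_one_sub_X_pow (k : ℕ) :
    (∏ i ∈ range k, (1 - X ^ (i + 1) : R[X])).natDegree = k * (k + 1) / 2 := by
  rw [natDegree_prod_of_monic _ _ fun i _ ↦ monic_one_sub_X_pow i.succ_pos]
  simp only [natDegree_one_sub_X_pow]
  have hshift := sum_range_succ' (fun i ↦ i) k
  rw [add_zero] at hshift
  rw [← hshift, sum_range_id, Nat.add_sub_cancel, mul_comm]

end CharTwo

end Polynomial

open PowerSeries.WithPiTopology in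
theorem powerSeriesMk_p_mul_prod_one_sub_X_pow (R : Type*) [CommRing R] (k : ℕ) :
    PowerSeries.mk (fun n ↦ (p n k : R)) * ∏ i ∈ range k, (1 - PowerSeries.X ^ (i + 1)) = 1 := by
  -- Only finitely many factors of the product are nontrivial, so any T2 topology on `R` will do.
  let _ : TopologicalSpace R := ⊥
  have _ : DiscreteTopology R := ⟨rfl⟩
  have hprod := (Nat.Partition.hasProd_powerSeriesMk_card_restricted R (· ≤ k)).tprod_eq
  rw [tprod_eq_prod (s := range k) (fun i hi ↦ by simp_all)] at hprod
  change PowerSeries.mk (fun n ↦ ((Nat.Partition.restricted n (· ≤ k)).card : R)) * _ = 1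
  rw [← hprod, ← prod_mul_distrib]
  refine prod_eq_one fun i hi ↦ ?_
  rw [if_pos (show i + 1 ≤ k from mem_range.mp hi)]
  simp_rw [pow_mul]
  exact tsum_pow_mul_one_sub_of_constantCoeff_eq_zero (by simp)

theorem stmt_10 (k : ℕ) (hk : 0 < k) :
    ∀ i : ℕ, ∃ n : ℕ, i ≤ n ∧ n ≤ i + k * (k + 1) / 2 - 1 ∧ Odd (p n k) := by
  intro i
  set q : (ZMod 2)[X] := ∏ i ∈ range k, (1 - X ^ (i + 1))
  have hdeg : q.natDegree = k * (k + 1) / 2 := natDegree_prod_one_sub_X_pow k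
  have hpos : 0 < q.natDegree := by
    rw [hdeg]
    exact Nat.div_pos (Nat.mul_le_mul hk (Nat.succ_le_succ hk)) two_pos
  have hf : (q : (ZMod 2)⟦X⟧) * PowerSeries.mk (fun n ↦ (p n k : ZMod 2)) = 1 := by
    rw [mul_comm, ← powerSeriesMk_p_mul_prod_one_sub_X_pow (ZMod 2) k,
      ← coeToPowerSeries.ringHom_apply, map_prod]
    simp [coeToPowerSeries.ringHom_apply]
  obtain ⟨n, hn, hodd⟩ := (monic_prod_one_sub_X_pow k).exists_mem_Ico_coeff_ne_zero hpos hf i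
  rw [PowerSeries.coeff_mk, ZMod.natCast_ne_zero_iff_odd] at hodd
  rw [mem_Ico, hdeg] at hn
  exact ⟨n, hn.1, by omega, hodd⟩
end
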